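/- arXiv:1904.06489 — 5 statements merged into one kernel-verified Lean document; each statement's English description precedes it below -/
import Mathlib

section
/- Let A be a real n×n matrix, B a real n×m matrix, T > 0, and let f : ℝ → ℝ^m be continuously differentiable with derivative v satisfying ‖v(t)‖ ≤ V for all t. For each nonnegative integer k define d[k] = ∫₀^T e^{Aτ} B f((k+1)T − τ) dτ. Then for every k ≥ 1, ‖d[k] − d[k−1]‖ ≤ T V ∫₀^T ‖e^{Aτ} B‖ dτ; in particular d[k] − d[k−1] = O(T²) as T → 0. -/
open scoped Matrix.Norms.L2Operator
open MeasureTheory NormedSpace Matrix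

/-- The sampled-data disturbance `d[k] = ∫₀ᵀ e^{Aτ} B f((k+1)T − τ) dτ`. -/
noncomputable def dSample {n m : ℕ} (A : Matrix (Fin n) (Fin n) ℝ)
    (B : Matrix (Fin n) (Fin m) ℝ) (f : ℝ → EuclideanSpace ℝ (Fin m))
    (T : ℝ) (k : ℕ) : EuclideanSpace ℝ (Fin n) :=
  ∫ τ in (0:ℝ)..T,
    Matrix.toEuclideanLin (NormedSpace.exp (τ • A) * B) (f (((k : ℝ) + 1) * T - τ))

set_option maxHeartbeats 1000000 in
/-- If `f` is continuously differentiable with derivative `v` and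
`‖v(t)‖ ≤ V` for all `t`, then for every `k ≥ 1`,
`‖d[k] − d[k−1]‖ ≤ T V ∫₀ᵀ ‖e^{Aτ} B‖ dτ`; in particular `d[k] − d[k−1] = O(T²)`
as `T → 0`. -/
theorem dSample_diff_bound
    {n m : ℕ} (A : Matrix (Fin n) (Fin n) ℝ) (B : Matrix (Fin n) (Fin m) ℝ)
    (f v : ℝ → EuclideanSpace ℝ (Fin m))
    (hf : ∀ t, HasDerivAt f (v t) t) (hv : Continuous v)
    (V : ℝ) (hV : ∀ t, ‖v t‖ ≤ V) :
    (∀ T : ℝ, 0 < T → ∀ k : ℕ, 1 ≤ k →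
        ‖dSample A B f T k - dSample A B f T (k - 1)‖
          ≤ T * V * ∫ τ in (0:ℝ)..T, ‖NormedSpace.exp (τ • A) * B‖) ∧
    (∃ K > 0, ∃ Tstar > 0, ∀ T : ℝ, 0 < T → T ≤ Tstar → ∀ k : ℕ, 1 ≤ k →
        ‖dSample A B f T k - dSample A B f T (k - 1)‖ ≤ K * T ^ 2) := by
  have hVnn : 0 ≤ V := le_trans (norm_nonneg _) (hV 0)
  have hfc : Continuous f := by
    rw [continuous_iff_continuousAt]; exact fun t => (hf t).continuousAt
  have hMc : Continuous fun τ : ℝ => NormedSpace.exp (τ • A) * B := by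
    have h1 : Continuous fun τ : ℝ => NormedSpace.exp (τ • A) :=
      (continuous_iff_continuousAt.2 fun x => (exp_analytic (𝕂 := ℝ) x).continuousAt).comp (continuous_id.smul continuous_const)
    exact h1.matrix_mul continuous_const
  have hnc : Continuous fun τ : ℝ => ‖NormedSpace.exp (τ • A) * B‖ := hMc.norm
  have hlip : ∀ a b : ℝ, ‖f b - f a‖ ≤ V * ‖b - a‖ := fun a b =>
    convex_univ.norm_image_sub_le_of_norm_hasDerivWithin_le
      (fun x _ => (hf x).hasDerivWithinAt) (fun x _ => hV x) trivial trivial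
  have hopb : ∀ (M : Matrix (Fin n) (Fin m) ℝ) (z : EuclideanSpace ℝ (Fin m)),
      ‖Matrix.toEuclideanLin M z‖ ≤ ‖M‖ * ‖z‖ := fun M z => Matrix.l2_opNorm_mulVec M z
  have hcont : ∀ c : ℝ, Continuous fun τ : ℝ =>
      Matrix.toEuclideanLin (NormedSpace.exp (τ • A) * B) (f (c - τ)) := by
    intro c
    have hfc' : Continuous fun τ : ℝ => f (c - τ) :=
      hfc.comp (continuous_const.sub continuous_id)
    have hx : Continuous fun τ : ℝ => WithLp.equiv 2 (Fin m → ℝ) (f (c - τ)) :=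
      (PiLp.continuous_ofLp 2 (fun _ : Fin m => ℝ)).comp hfc'
    have h2 : Continuous fun τ : ℝ =>
        (NormedSpace.exp (τ • A) * B) *ᵥ WithLp.equiv 2 (Fin m → ℝ) (f (c - τ)) :=
      hMc.matrix_mulVec hx
    have h3 : Continuous fun τ : ℝ => (WithLp.equiv 2 (Fin n → ℝ)).symm
        ((NormedSpace.exp (τ • A) * B) *ᵥ WithLp.equiv 2 (Fin m → ℝ) (f (c - τ))) :=
      (PiLp.continuous_toLp 2 (fun _ : Fin n => ℝ)).comp h2
    exact h3
  have main : ∀ T : ℝ, 0 < T → ∀ k : ℕ, 1 ≤ k →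
      ‖dSample A B f T k - dSample A B f T (k - 1)‖
        ≤ T * V * ∫ τ in (0:ℝ)..T, ‖NormedSpace.exp (τ • A) * B‖ := by
    intro T hT k hk
    have hcast : ((k - 1 : ℕ) : ℝ) + 1 = (k : ℝ) := by
      rw [Nat.cast_sub hk]; push_cast; ring
    have h1 : IntervalIntegrable
        (fun τ => Matrix.toEuclideanLin (NormedSpace.exp (τ • A) * B) (f (((k : ℝ) + 1) * T - τ)))
        volume 0 T := (hcont (((k : ℝ) + 1) * T)).intervalIntegrable 0 T
    have h2 : IntervalIntegrable
        (fun τ => Matrix.toEuclideanLin (NormedSpace.exp (τ • A) * B) (f ((k : ℝ) * T - τ)))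
        volume 0 T := (hcont ((k : ℝ) * T)).intervalIntegrable 0 T
    have hdiff : dSample A B f T k - dSample A B f T (k - 1)
        = ∫ τ in (0:ℝ)..T,
            (Matrix.toEuclideanLin (NormedSpace.exp (τ • A) * B) (f (((k : ℝ) + 1) * T - τ))
              - Matrix.toEuclideanLin (NormedSpace.exp (τ • A) * B) (f ((k : ℝ) * T - τ))) := by
      rw [dSample, dSample, hcast, ← intervalIntegral.integral_sub h1 h2]
    rw [hdiff]
    have hptw : ∀ τ ∈ Set.Icc (0:ℝ) T,
        ‖Matrix.toEuclideanLin (NormedSpace.exp (τ • A) * B) (f (((k : ℝ) + 1) * T - τ))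
            - Matrix.toEuclideanLin (NormedSpace.exp (τ • A) * B) (f ((k : ℝ) * T - τ))‖
          ≤ ‖NormedSpace.exp (τ • A) * B‖ * (V * T) := by
      intro τ _
      rw [← map_sub]
      refine (hopb _ _).trans ?_
      refine mul_le_mul_of_nonneg_left ?_ (norm_nonneg _)
      have := hlip ((k : ℝ) * T - τ) (((k : ℝ) + 1) * T - τ)
      have harg : ((k : ℝ) + 1) * T - τ - ((k : ℝ) * T - τ) = T := by ring
      rw [harg] at this
      calc ‖f (((k : ℝ) + 1) * T - τ) - f ((k : ℝ) * T - τ)‖ ≤ V * ‖T‖ := this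
        _ = V * T := by rw [Real.norm_of_nonneg hT.le]
    calc ‖∫ τ in (0:ℝ)..T,
            (Matrix.toEuclideanLin (NormedSpace.exp (τ • A) * B) (f (((k : ℝ) + 1) * T - τ))
              - Matrix.toEuclideanLin (NormedSpace.exp (τ • A) * B) (f ((k : ℝ) * T - τ)))‖
        ≤ ∫ τ in (0:ℝ)..T,
            ‖Matrix.toEuclideanLin (NormedSpace.exp (τ • A) * B) (f (((k : ℝ) + 1) * T - τ))
              - Matrix.toEuclideanLin (NormedSpace.exp (τ • A) * B) (f ((k : ℝ) * T - τ))‖ :=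
          intervalIntegral.norm_integral_le_integral_norm hT.le
      _ ≤ ∫ τ in (0:ℝ)..T, ‖NormedSpace.exp (τ • A) * B‖ * (V * T) :=
          intervalIntegral.integral_mono_on hT.le ((h1.sub h2).norm)
            ((hnc.mul continuous_const).intervalIntegrable 0 T) hptw
      _ = (∫ τ in (0:ℝ)..T, ‖NormedSpace.exp (τ • A) * B‖) * (V * T) :=
          intervalIntegral.integral_mul_const _ _
      _ = T * V * ∫ τ in (0:ℝ)..T, ‖NormedSpace.exp (τ • A) * B‖ := by ring
  refine ⟨main, ?_⟩
  obtain ⟨x, -, hx⟩ := isCompact_Icc.exists_isMaxOn (Set.nonempty_Icc.2 zero_le_one)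
    (hnc.continuousOn (s := Set.Icc (0:ℝ) 1))
  set C : ℝ := ‖NormedSpace.exp (x • A) * B‖ with hCdef
  have hC0 : 0 ≤ C := norm_nonneg _
  refine ⟨V * C + 1, by positivity, 1, one_pos, ?_⟩
  intro T hT hT1 k hk
  have hint : (∫ τ in (0:ℝ)..T, ‖NormedSpace.exp (τ • A) * B‖) ≤ C * T := by
    have h := intervalIntegral.integral_mono_on (μ := volume) hT.le
      (hnc.intervalIntegrable 0 T) intervalIntegrable_const
      (fun τ hτ => hx ⟨hτ.1, hτ.2.trans hT1⟩)
    simpa [mul_comm] using h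
  calc ‖dSample A B f T k - dSample A B f T (k - 1)‖
      ≤ T * V * ∫ τ in (0:ℝ)..T, ‖NormedSpace.exp (τ • A) * B‖ := main T hT k hk
    _ ≤ T * V * (C * T) := by
        have : 0 ≤ T * V := by positivity
        exact mul_le_mul_of_nonneg_left hint this
    _ ≤ (V * C + 1) * T ^ 2 := by nlinarith [sq_nonneg T]
end

section
/- Let A be a real n×n matrix, B a real n×m matrix, T > 0, and let f : ℝ → ℝ^m be twice continuously differentiable with ‖f″(t)‖ ≤ W for all t. For each nonnegative integer k define d[k] = ∫₀^T e^{Aτ} B f((k+1)T − τ) dτ. Then for every k ≥ 2, ‖d[k] − 2 d[k−1] + d[k−2]‖ ≤ T² W ∫₀^T ‖e^{Aτ} B‖ dτ; in particular d[k] − 2 d[k−1] + d[k−2] = O(T³) as T → 0. -/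
open scoped Matrix.Norms.L2Operator
open MeasureTheory NormedSpace Matrix

/-- Second-difference bound from a bound on the second derivative. -/
lemma secondDiff_norm_le {m : ℕ} (f v w : ℝ → EuclideanSpace ℝ (Fin m))
    (hf : ∀ t, HasDerivAt f (v t) t) (hv : ∀ t, HasDerivAt v (w t) t)
    (W : ℝ) (hW : ∀ t, ‖w t‖ ≤ W) (t T : ℝ) (hT : 0 ≤ T) :
    ‖f (t + T) - (2 : ℝ) • f t + f (t - T)‖ ≤ W * T * T := by
  have hvlip : ∀ x y : ℝ, ‖v y - v x‖ ≤ W * ‖y - x‖ := fun x y =>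
    (convex_univ (𝕜 := ℝ)).norm_image_sub_le_of_norm_hasDerivWithin_le
      (fun z _ => (hv z).hasDerivWithinAt) (fun z _ => hW z)
      (Set.mem_univ x) (Set.mem_univ y)
  set g : ℝ → EuclideanSpace ℝ (Fin m) := fun s => f (t + s) - f (t + s - T) with hg
  have hg' : ∀ s, HasDerivAt g (v (t + s) - v (t + s - T)) s := by
    intro s
    have h1 : HasDerivAt (fun s : ℝ => f (t + s)) (v (t + s)) s := by
      have := (hf (t + s)).scomp s ((hasDerivAt_id s).const_add t)
      simpa [Function.comp_def] using this
    have h2 : HasDerivAt (fun s : ℝ => f (t + s - T)) (v (t + s - T)) s := by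
      have := (hf (t + s - T)).scomp s (((hasDerivAt_id s).const_add t).sub_const T)
      simpa [Function.comp_def] using this
    exact h1.sub h2
  have hbound : ∀ s ∈ (Set.univ : Set ℝ), ‖v (t + s) - v (t + s - T)‖ ≤ W * T := by
    intro s _
    have h := hvlip (t + s - T) (t + s)
    have he : (t + s) - (t + s - T) = T := by ring
    rw [he] at h
    simpa [Real.norm_eq_abs, abs_of_nonneg hT] using h
  have key : ‖g T - g 0‖ ≤ (W * T) * ‖T - (0:ℝ)‖ :=
    (convex_univ (𝕜 := ℝ)).norm_image_sub_le_of_norm_hasDerivWithin_le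
      (fun z _ => (hg' z).hasDerivWithinAt) hbound (Set.mem_univ 0) (Set.mem_univ T)
  have hgeq : g T - g 0 = f (t + T) - (2 : ℝ) • f t + f (t - T) := by
    simp only [hg]
    have h1 : t + T - T = t := by ring
    have h2 : t + (0:ℝ) = t := by ring
    have h3 : t + (0:ℝ) - T = t - T := by ring
    rw [h1, h2, two_smul ℝ (f t)]
    abel
  rw [hgeq] at key
  calc ‖f (t + T) - (2 : ℝ) • f t + f (t - T)‖ ≤ (W * T) * ‖T - (0:ℝ)‖ := key
    _ = W * T * T := by rw [sub_zero, Real.norm_eq_abs, abs_of_nonneg hT]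

/-- If `f` is twice continuously differentiable with `‖f″(t)‖ ≤ W`
for all `t`, then for every `k ≥ 2`,
`‖d[k] − 2 d[k−1] + d[k−2]‖ ≤ T² W ∫₀ᵀ ‖e^{Aτ} B‖ dτ`; in particular
`d[k] − 2 d[k−1] + d[k−2] = O(T³)` as `T → 0`. -/
theorem dSample_second_diff_bound
    {n m : ℕ} (A : Matrix (Fin n) (Fin n) ℝ) (B : Matrix (Fin n) (Fin m) ℝ)
    (f v w : ℝ → EuclideanSpace ℝ (Fin m))
    (hf : ∀ t, HasDerivAt f (v t) t) (hv : ∀ t, HasDerivAt v (w t) t)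
    (hw : Continuous w)
    (W : ℝ) (hW : ∀ t, ‖w t‖ ≤ W) :
    (∀ T : ℝ, 0 < T → ∀ k : ℕ, 2 ≤ k →
        ‖dSample A B f T k - (2 : ℝ) • dSample A B f T (k - 1) + dSample A B f T (k - 2)‖
          ≤ T ^ 2 * W * ∫ τ in (0:ℝ)..T, ‖exp (τ • A) * B‖) ∧
    (∃ K > 0, ∃ Tstar > 0, ∀ T : ℝ, 0 < T → T ≤ Tstar → ∀ k : ℕ, 2 ≤ k →
        ‖dSample A B f T k - (2 : ℝ) • dSample A B f T (k - 1) + dSample A B f T (k - 2)‖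
          ≤ K * T ^ 3) := by
  have hW0 : 0 ≤ W := (norm_nonneg _).trans (hW 0)
  have hfc : Continuous f := by
    rw [continuous_iff_continuousAt]; exact fun t => (hf t).continuousAt
  set M : ℝ → Matrix (Fin n) (Fin m) ℝ := fun τ => exp (τ • A) * B with hM
  have hexp : Continuous (exp : Matrix (Fin n) (Fin n) ℝ → Matrix (Fin n) (Fin n) ℝ) := by
    letI : NormedAlgebra ℚ (Matrix (Fin n) (Fin n) ℝ) := NormedAlgebra.restrictScalars ℚ ℝ _
    convert exp_continuous (𝔸 := Matrix (Fin n) (Fin n) ℝ)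
  have hMc : Continuous M :=
    ((hexp).comp (continuous_id.smul continuous_const)).matrix_mul
      continuous_const
  set e : Matrix (Fin n) (Fin m) ℝ ≃ₗ[ℝ]
      (EuclideanSpace ℝ (Fin m) →L[ℝ] EuclideanSpace ℝ (Fin n)) :=
    Matrix.toEuclideanLin.trans LinearMap.toContinuousLinearMap with he
  have hGc : Continuous fun τ => e (M τ) :=
    (e.toLinearMap.continuous_of_finiteDimensional).comp hMc
  have hnorm : ∀ N : Matrix (Fin n) (Fin m) ℝ, ‖e N‖ = ‖N‖ := fun N =>
    (Matrix.l2_opNorm_def N).symm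
  have hd : ∀ (T : ℝ) (j : ℕ), dSample A B f T j
      = ∫ τ in (0:ℝ)..T, e (M τ) (f (((j : ℝ) + 1) * T - τ)) := fun T j => rfl
  -- the main bound
  have main : ∀ T : ℝ, 0 < T → ∀ k : ℕ, 2 ≤ k →
      ‖dSample A B f T k - (2 : ℝ) • dSample A B f T (k - 1) + dSample A B f T (k - 2)‖
        ≤ T ^ 2 * W * ∫ τ in (0:ℝ)..T, ‖M τ‖ := by
    intro T hT k hk
    have h1k : (1:ℕ) ≤ k := le_trans one_le_two hk
    have c1 : ((k - 1 : ℕ) : ℝ) + 1 = (k : ℝ) := by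
      rw [Nat.cast_sub h1k, Nat.cast_one]; ring
    have c2 : ((k - 2 : ℕ) : ℝ) + 1 = (k : ℝ) - 1 := by
      rw [Nat.cast_sub hk, Nat.cast_two]; ring
    have hcont : ∀ c : ℝ, Continuous fun τ => e (M τ) (f (c - τ)) := fun c =>
      hGc.clm_apply (hfc.comp (continuous_const.sub continuous_id))
    have ha := (hcont (((k:ℝ)+1)*T)).intervalIntegrable (μ := volume) 0 T
    have hb := (hcont ((k:ℝ)*T)).intervalIntegrable (μ := volume) 0 T
    have hc := (hcont (((k:ℝ)-1)*T)).intervalIntegrable (μ := volume) 0 T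
    have hsum : dSample A B f T k - (2 : ℝ) • dSample A B f T (k - 1)
          + dSample A B f T (k - 2)
        = ∫ τ in (0:ℝ)..T, e (M τ) (f (((k:ℝ)+1)*T - τ)
            - (2:ℝ) • f ((k:ℝ)*T - τ) + f (((k:ℝ)-1)*T - τ)) := by
      rw [hd T k, hd T (k-1), hd T (k-2)]
      simp only [c1, c2]
      have expand : (fun τ => e (M τ) (f (((k:ℝ)+1)*T - τ)
              - (2:ℝ) • f ((k:ℝ)*T - τ) + f (((k:ℝ)-1)*T - τ)))
          = fun τ => (e (M τ) (f (((k:ℝ)+1)*T - τ))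
              - (2:ℝ) • e (M τ) (f ((k:ℝ)*T - τ))) + e (M τ) (f (((k:ℝ)-1)*T - τ)) := by
        funext τ; simp [map_add, map_sub, _root_.map_smul]
      have hb2 : IntervalIntegrable
          (fun τ => (2:ℝ) • (e (M τ)) (f ((k:ℝ)*T - τ))) volume 0 T :=
        ((hcont ((k:ℝ)*T)).const_smul (2:ℝ)).intervalIntegrable 0 T
      have hab : IntervalIntegrable
          (fun τ => (e (M τ)) (f (((k:ℝ)+1)*T - τ))
            - (2:ℝ) • (e (M τ)) (f ((k:ℝ)*T - τ))) volume 0 T := ha.sub hb2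
      rw [expand, intervalIntegral.integral_add hab hc,
        intervalIntegral.integral_sub ha hb2, intervalIntegral.integral_smul]
    have hΔ : ∀ τ : ℝ, ‖f (((k:ℝ)+1)*T - τ) - (2:ℝ) • f ((k:ℝ)*T - τ)
        + f (((k:ℝ)-1)*T - τ)‖ ≤ W * T * T := by
      intro τ
      have e1 : ((k:ℝ)+1)*T - τ = ((k:ℝ)*T - τ) + T := by ring
      have e2 : ((k:ℝ)-1)*T - τ = ((k:ℝ)*T - τ) - T := by ring
      rw [e1, e2]
      exact secondDiff_norm_le f v w hf hv W hW _ T hT.le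
    have hptw : ∀ τ ∈ Set.Icc (0:ℝ) T,
        ‖e (M τ) (f (((k:ℝ)+1)*T - τ) - (2:ℝ) • f ((k:ℝ)*T - τ)
          + f (((k:ℝ)-1)*T - τ))‖ ≤ (W * T * T) * ‖M τ‖ := by
      intro τ _
      calc ‖e (M τ) _‖ ≤ ‖e (M τ)‖ * ‖f (((k:ℝ)+1)*T - τ) - (2:ℝ) • f ((k:ℝ)*T - τ)
            + f (((k:ℝ)-1)*T - τ)‖ := (e (M τ)).le_opNorm _
        _ = ‖M τ‖ * ‖f (((k:ℝ)+1)*T - τ) - (2:ℝ) • f ((k:ℝ)*T - τ)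
            + f (((k:ℝ)-1)*T - τ)‖ := by rw [hnorm]
        _ ≤ ‖M τ‖ * (W * T * T) :=
          mul_le_mul_of_nonneg_left (hΔ τ) (norm_nonneg _)
        _ = (W * T * T) * ‖M τ‖ := by ring
    have hcontΔ : Continuous fun τ => e (M τ) (f (((k:ℝ)+1)*T - τ)
        - (2:ℝ) • f ((k:ℝ)*T - τ) + f (((k:ℝ)-1)*T - τ)) := by
      apply hGc.clm_apply
      exact ((hfc.comp (continuous_const.sub continuous_id)).sub
        ((hfc.comp (continuous_const.sub continuous_id)).const_smul (2:ℝ))).add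
        (hfc.comp (continuous_const.sub continuous_id))
    rw [hsum]
    calc ‖∫ τ in (0:ℝ)..T, e (M τ) (f (((k:ℝ)+1)*T - τ)
          - (2:ℝ) • f ((k:ℝ)*T - τ) + f (((k:ℝ)-1)*T - τ))‖
        ≤ ∫ τ in (0:ℝ)..T, ‖e (M τ) (f (((k:ℝ)+1)*T - τ)
          - (2:ℝ) • f ((k:ℝ)*T - τ) + f (((k:ℝ)-1)*T - τ))‖ :=
          intervalIntegral.norm_integral_le_integral_norm hT.le
      _ ≤ ∫ τ in (0:ℝ)..T, (W * T * T) * ‖M τ‖ :=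
          intervalIntegral.integral_mono_on hT.le
            (hcontΔ.norm.intervalIntegrable 0 T)
            ((continuous_const.mul hMc.norm).intervalIntegrable 0 T) hptw
      _ = (W * T * T) * ∫ τ in (0:ℝ)..T, ‖M τ‖ := intervalIntegral.integral_const_mul _ _
      _ = T ^ 2 * W * ∫ τ in (0:ℝ)..T, ‖M τ‖ := by ring
  refine ⟨main, ?_⟩
  -- O(T³) part
  obtain ⟨C, hC⟩ := (isCompact_Icc (a := (0:ℝ)) (b := 1)).exists_bound_of_continuousOn
    hMc.norm.continuousOn
  set C' : ℝ := max C 0 with hC'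
  have hC'0 : 0 ≤ C' := le_max_right _ _
  refine ⟨W * C' + 1, by positivity, 1, one_pos, ?_⟩
  intro T hT hT1 k hk
  have hIle : (∫ τ in (0:ℝ)..T, ‖M τ‖) ≤ C' * T := by
    have h1 : (∫ τ in (0:ℝ)..T, ‖M τ‖) ≤ ∫ _ in (0:ℝ)..T, C' := by
      apply intervalIntegral.integral_mono_on hT.le
        (hMc.norm.intervalIntegrable 0 T) intervalIntegrable_const
      intro x hx
      calc ‖M x‖ ≤ ‖‖M x‖‖ := le_abs_self _
        _ ≤ C := hC x ⟨hx.1, hx.2.trans hT1⟩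
        _ ≤ C' := le_max_left _ _
    rw [intervalIntegral.integral_const, smul_eq_mul, sub_zero] at h1
    linarith [h1]
  have hInn : 0 ≤ ∫ τ in (0:ℝ)..T, ‖M τ‖ :=
    intervalIntegral.integral_nonneg hT.le (fun x _ => norm_nonneg _)
  calc ‖dSample A B f T k - (2 : ℝ) • dSample A B f T (k - 1) + dSample A B f T (k - 2)‖
      ≤ T ^ 2 * W * ∫ τ in (0:ℝ)..T, ‖M τ‖ := main T hT k hk
    _ ≤ T ^ 2 * W * (C' * T) :=
        mul_le_mul_of_nonneg_left hIle (by positivity)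
    _ = (W * C') * T ^ 3 := by ring
    _ ≤ (W * C' + 1) * T ^ 3 := by nlinarith [pow_pos hT 3]
end

section
/- Let Ω be an m×m complex matrix and let T and α be complex scalars. Consider the 2m×2m block matrix A_e1 = [[I_m + TΩ, I_m], [−((1−α)I_m + TΩ)(I_m + TΩ), −((1−α)I_m + TΩ)]]. Then the characteristic polynomial of A_e1 equals X^m (X − α)^m; in particular, the spectrum of A_e1 is contained in {0, α}. -/
/-!
Write `B = I + TΩ` and `C = (1 - α)I + TΩ`. Conjugating `[[B, I], [-CB, -C]]` by the block
unitriangular matrix `[[I, 0], [-B, I]]` gives the block upper triangular matrix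
`[[0, I], [0, B - C]]`, and `B - C = αI`.
-/

open Polynomial Matrix

namespace Matrix

variable {n R : Type*} [Fintype n] [DecidableEq n] [CommRing R]

theorem fromBlocks_one_neg_mul_eq (B C : Matrix n n R) :
    fromBlocks B 1 (-(C * B)) (-C) =
      fromBlocks 1 0 (-B) 1 * fromBlocks 0 1 0 (B - C) * fromBlocks 1 0 B 1 := by
  simp [fromBlocks_multiply, neg_add_eq_sub, sub_sub_cancel_left]

theorem charpoly_fromBlocks_one_neg_mul (B C : Matrix n n R) :
    (fromBlocks B 1 (-(C * B)) (-C)).charpoly = X ^ Fintype.card n * (B - C).charpoly := by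
  have hinv : fromBlocks 1 0 B 1 * fromBlocks 1 0 (-B) 1 = (1 : Matrix (n ⊕ n) (n ⊕ n) R) := by
    simp [fromBlocks_multiply]
  rw [fromBlocks_one_neg_mul_eq, charpoly_mul_comm, ← mul_assoc, hinv, one_mul,
    charpoly_fromBlocks_zero₂₁, charpoly_zero]

theorem charpoly_smul_one (a : R) :
    (a • (1 : Matrix n n R)).charpoly = (X - C a) ^ Fintype.card n := by
  rw [smul_one_eq_diagonal, charpoly_diagonal, Finset.prod_const, Finset.card_univ]

end Matrix

/-- For an `m×m` complex matrix `Ω` and scalars `T, α`, the `2m×2m`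
block matrix
`A_e1 = [[I + TΩ, I], [−((1−α)I + TΩ)(I + TΩ), −((1−α)I + TΩ)]]`
has characteristic polynomial `X^m (X − α)^m`; in particular its spectrum is
contained in `{0, α}`. -/
theorem charpoly_Ae1
    {m : ℕ} (Ω : Matrix (Fin m) (Fin m) ℂ) (T α : ℂ) :
    (Matrix.fromBlocks
        (1 + T • Ω) 1
        (-(((1 - α) • 1 + T • Ω) * (1 + T • Ω))) (-((1 - α) • (1 : Matrix (Fin m) (Fin m) ℂ) + T • Ω))).charpoly
      = X ^ m * (X - C α) ^ m ∧
    spectrum ℂ (Matrix.fromBlocks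
        (1 + T • Ω) 1
        (-(((1 - α) • 1 + T • Ω) * (1 + T • Ω))) (-((1 - α) • (1 : Matrix (Fin m) (Fin m) ℂ) + T • Ω)))
      ⊆ {0, α} := by
  have hdiff : (1 + T • Ω) - ((1 - α) • 1 + T • Ω) = α • (1 : Matrix (Fin m) (Fin m) ℂ) := by
    module
  have hchar := charpoly_fromBlocks_one_neg_mul (1 + T • Ω) ((1 - α) • 1 + T • Ω)
  rw [hdiff, charpoly_smul_one, Fintype.card_fin] at hchar
  refine ⟨hchar, fun μ hμ => ?_⟩
  rw [mem_spectrum_iff_isRoot_charpoly, hchar, IsRoot.def, eval_mul, eval_pow, eval_pow, eval_X,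
    eval_sub, eval_X, eval_C, mul_eq_zero] at hμ
  rcases hμ with hμ | hμ
  · exact .inl (eq_zero_of_pow_eq_zero hμ)
  · exact .inr (sub_eq_zero.mp (eq_zero_of_pow_eq_zero hμ))
end

section
/- Let β > 0, c ≥ 0, T > 0 with βT < 1, and set α = 1 − βT. Let (s[k]) be a sequence in ℝ^m satisfying s[k+1] = α s[k] + e[k] for all k ≥ 0 with ‖e[k]‖ ≤ c T² for all k. Then lim sup_{k→∞} ‖s[k]‖ ≤ (c/β) T; i.e., the quasi-sliding motion has an O(T) boundary layer. -/
/-!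
Subtracting the fixed point `L = b / (1 - α)` of `x ↦ α x + b` turns the bound
`u (k + 1) ≤ α u k + b` into `u k - L ≤ α ^ k (u 0 - L)`, so the limsup of `u` is at most `L`.
For `u = ‖s‖`, `α = 1 - βT` and `b = cT²` the fixed point is `cT² / (βT) = (c / β) T`.
-/

open Filter

section AffineRecursiveBound

variable {u : ℕ → ℝ} {α b : ℝ}

theorem le_pow_mul_add_of_le_mul_add (hα₀ : 0 ≤ α) (hα₁ : α ≠ 1) (hu : ∀ k, u (k + 1) ≤ α * u k + b)
    (k : ℕ) : u k ≤ α ^ k * (u 0 - b / (1 - α)) + b / (1 - α) := by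
  have hfix : α * (b / (1 - α)) + b = b / (1 - α) := by
    field_simp [sub_ne_zero.mpr hα₁.symm]
    ring
  induction k with
  | zero => simp
  | succ k ih =>
    calc u (k + 1) ≤ α * u k + b := hu k
      _ ≤ α * (α ^ k * (u 0 - b / (1 - α)) + b / (1 - α)) + b := by gcongr
      _ = α ^ (k + 1) * (u 0 - b / (1 - α)) + (α * (b / (1 - α)) + b) := by ring
      _ = α ^ (k + 1) * (u 0 - b / (1 - α)) + b / (1 - α) := by rw [hfix]

theorem limsup_le_div_one_sub_of_le_mul_add (hu₀ : ∀ k, 0 ≤ u k) (hα₀ : 0 ≤ α) (hα₁ : α < 1)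
    (hu : ∀ k, u (k + 1) ≤ α * u k + b) : limsup u atTop ≤ b / (1 - α) := by
  have hbound : Tendsto (fun k => α ^ k * (u 0 - b / (1 - α)) + b / (1 - α)) atTop
      (nhds (b / (1 - α))) := by
    simpa using ((tendsto_pow_atTop_nhds_zero_of_lt_one hα₀ hα₁).mul_const
      (u 0 - b / (1 - α))).add_const (b / (1 - α))
  rw [← hbound.limsup_eq]
  exact limsup_le_limsup (Eventually.of_forall (le_pow_mul_add_of_le_mul_add hα₀ hα₁.ne hu))
    (isCoboundedUnder_le_of_le atTop hu₀) hbound.isBoundedUnder_le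

end AffineRecursiveBound

theorem quasi_sliding_OT_boundary_layer_general
    {m : ℕ} (β c T : ℝ) (hβ : 0 < β) (hT : 0 < T) (hβT : β * T < 1)
    (s e : ℕ → EuclideanSpace ℝ (Fin m))
    (hrec : ∀ k : ℕ, s (k + 1) = (1 - β * T) • s k + e k)
    (hE : ∀ k : ℕ, ‖e k‖ ≤ c * T ^ 2) :
    limsup (fun k : ℕ => ‖s k‖) atTop ≤ (c / β) * T := by
  have hβT₀ : 0 < β * T := mul_pos hβ hT
  have hfix : (c / β) * T = c * T ^ 2 / (1 - (1 - β * T)) := by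
    field_simp
    ring
  rw [hfix]
  refine limsup_le_div_one_sub_of_le_mul_add (fun k => norm_nonneg _) (by linarith) (by linarith)
    fun k => ?_
  calc ‖s (k + 1)‖ ≤ ‖(1 - β * T) • s k‖ + ‖e k‖ := hrec k ▸ norm_add_le _ _
    _ ≤ (1 - β * T) * ‖s k‖ + c * T ^ 2 := by
      rw [norm_smul, Real.norm_of_nonneg (by linarith)]
      gcongr
      exact hE k

/-- Let `β > 0`, `c ≥ 0`, `T > 0` with `βT < 1`, and `α = 1 − βT`.
If `s[k+1] = α s[k] + e[k]` with `‖e[k]‖ ≤ c T²`, then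
`limsup_{k→∞} ‖s[k]‖ ≤ (c/β) T`, i.e. the quasi-sliding motion has an `O(T)`
boundary layer. -/
theorem quasi_sliding_OT_boundary_layer
    {m : ℕ} (β c T : ℝ) (hβ : 0 < β) (hc : 0 ≤ c) (hT : 0 < T) (hβT : β * T < 1)
    (s e : ℕ → EuclideanSpace ℝ (Fin m))
    (hrec : ∀ k : ℕ, s (k + 1) = (1 - β * T) • s k + e k)
    (hE : ∀ k : ℕ, ‖e k‖ ≤ c * T ^ 2) :
    limsup (fun k : ℕ => ‖s k‖) atTop ≤ (c / β) * T :=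
  quasi_sliding_OT_boundary_layer_general β c T hβ hT hβT s e hrec hE
end

section
/- Let β > 0, c ≥ 0, T > 0 with βT < 1, and set α = 1 − βT. Let (s[k]) be a sequence in ℝ^m satisfying s[k+1] = α s[k] + e[k] for all k ≥ 0 with ‖e[k]‖ ≤ c T³ for all k. Then lim sup_{k→∞} ‖s[k]‖ ≤ (c/β) T²; i.e., the quasi-sliding motion has an O(T²) boundary layer. -/
open Filter

/-- Let `β > 0`, `c ≥ 0`, `T > 0` with `βT < 1`, and `α = 1 − βT`.
If `s[k+1] = α s[k] + e[k]` with `‖e[k]‖ ≤ c T³`, then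
`limsup_{k→∞} ‖s[k]‖ ≤ (c/β) T²`, i.e. the quasi-sliding motion has an `O(T²)`
boundary layer. -/
theorem quasi_sliding_OT2_boundary_layer
    {m : ℕ} (β c T : ℝ) (hβ : 0 < β) (hc : 0 ≤ c) (hT : 0 < T) (hβT : β * T < 1)
    (s e : ℕ → EuclideanSpace ℝ (Fin m))
    (hrec : ∀ k : ℕ, s (k + 1) = (1 - β * T) • s k + e k)
    (hE : ∀ k : ℕ, ‖e k‖ ≤ c * T ^ 3) :
    limsup (fun k : ℕ => ‖s k‖) atTop ≤ (c / β) * T ^ 2 := by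
  set α : ℝ := 1 - β * T with hα
  have hα0 : 0 < α := by simp [hα]; linarith
  have hα1 : α < 1 := by
    have : 0 < β * T := mul_pos hβ hT
    simp [hα]; linarith
  set M : ℝ := (c / β) * T ^ 2 with hM
  have key : ∀ k, ‖s k‖ ≤ α ^ k * ‖s 0‖ + M := by
    intro k
    induction k with
    | zero =>
      have : (0:ℝ) ≤ M := by positivity
      simp; linarith
    | succ k ih =>
      have h1 : ‖s (k+1)‖ ≤ α * ‖s k‖ + c * T ^ 3 := by
        rw [hrec k]
        calc ‖α • s k + e k‖ ≤ ‖α • s k‖ + ‖e k‖ := norm_add_le _ _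
          _ ≤ α * ‖s k‖ + c * T ^ 3 := by
              rw [norm_smul, Real.norm_eq_abs, abs_of_pos hα0]
              exact add_le_add le_rfl (hE k)
      have hcT : α * M + c * T ^ 3 ≤ M := by
        have : c * T ^ 3 = (1 - α) * M := by
          rw [hα, hM, div_mul_eq_mul_div, mul_div_assoc', eq_div_iff hβ.ne']; ring
        nlinarith
      calc ‖s (k+1)‖ ≤ α * ‖s k‖ + c * T ^ 3 := h1
        _ ≤ α * (α ^ k * ‖s 0‖ + M) + c * T ^ 3 := by nlinarith [ih]
        _ = α ^ (k+1) * ‖s 0‖ + (α * M + c * T ^ 3) := by ring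
        _ ≤ α ^ (k+1) * ‖s 0‖ + M := by linarith
  have htend : Tendsto (fun k : ℕ => α ^ k * ‖s 0‖ + M) atTop (nhds (0 * ‖s 0‖ + M)) := by
    exact Tendsto.add (Tendsto.mul_const _ (tendsto_pow_atTop_nhds_zero_of_lt_one hα0.le hα1))
      tendsto_const_nhds
  have hls : limsup (fun k : ℕ => α ^ k * ‖s 0‖ + M) atTop = M := by
    have := htend.limsup_eq
    simpa using this
  have hle : limsup (fun k : ℕ => ‖s k‖) atTop ≤
      limsup (fun k : ℕ => α ^ k * ‖s 0‖ + M) atTop := by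
    refine limsup_le_limsup (Eventually.of_forall key) ?_ ?_
    · exact IsBoundedUnder.isCoboundedUnder_le
        ⟨0, eventually_map.2 (Eventually.of_forall fun k => norm_nonneg (s k))⟩
    · exact htend.isBoundedUnder_le
  exact hls ▸ hle
end
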